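/- arXiv:1710.07744 — 2 statements merged into one kernel-verified Lean document; each statement's English description precedes it below -/
import Mathlib

section
/- The commutation relation [A_y, L] = A_x holds for the symmetry operators of the two-dimensional hydrogen atom: for every function f : ℝ² → ℂ that is C^∞ on S = ℝ² \ {0} and every p ∈ S, one has A_y(L f)(p) − L(A_y f)(p) = A_x f(p). -/
noncomputable section

open Complex

/-- `S = ℝ² \ {0}`. -/
def S : Set (ℝ × ℝ) := {p | p ≠ 0}

/-- Partial derivative in the first coordinate. -/
def pdx (f : ℝ × ℝ → ℂ) (p : ℝ × ℝ) : ℂ := fderiv ℝ f p (1, 0)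

/-- Partial derivative in the second coordinate. -/
def pdy (f : ℝ × ℝ → ℂ) (p : ℝ × ℝ) : ℂ := fderiv ℝ f p (0, 1)

/-- `r(x,y) = √(x² + y²)`. -/
def rr (p : ℝ × ℝ) : ℝ := Real.sqrt (p.1 ^ 2 + p.2 ^ 2)

/-- Angular momentum operator: `(Lf)(p) = y·∂ₓf(p) − x·∂_yf(p)`. -/
def Lop (f : ℝ × ℝ → ℂ) (p : ℝ × ℝ) : ℂ := (p.2 : ℂ) * pdx f p - (p.1 : ℂ) * pdy f p

/-- Schrödinger operator of the 2D hydrogen atom. -/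
def Hop (k : ℝ) (f : ℝ × ℝ → ℂ) (p : ℝ × ℝ) : ℂ :=
  -(1 / 2 : ℂ) * (pdx (pdx f) p + pdy (pdy f) p) - ((k / rr p : ℝ) : ℂ) * f p

/-- First component of the quantum Laplace–Runge–Lenz vector. -/
def Axop (k : ℝ) (f : ℝ × ℝ → ℂ) (p : ℝ × ℝ) : ℂ :=
  (Complex.I / (Real.sqrt 2 : ℂ)) *
    ((p.1 : ℂ) * pdy (pdy f) p - (p.2 : ℂ) * pdx (pdy f) p - (1 / 2 : ℂ) * pdx f p
      + ((k * p.1 / rr p : ℝ) : ℂ) * f p)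

/-- Second component of the quantum Laplace–Runge–Lenz vector. -/
def Ayop (k : ℝ) (f : ℝ × ℝ → ℂ) (p : ℝ × ℝ) : ℂ :=
  (Complex.I / (Real.sqrt 2 : ℂ)) *
    ((p.2 : ℂ) * pdx (pdx f) p - (p.1 : ℂ) * pdx (pdy f) p - (1 / 2 : ℂ) * pdy f p
      + ((k * p.2 / rr p : ℝ) : ℂ) * f p)

/-!
`L` is the derivative along the rotation field `p ↦ (y, -x)`: `(L f)(p) = Df(p)(y, -x)`.
Hence `L` is a derivation with `L x = y`, `L y = -x`, which kills every function of `x² + y²`,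
and, by symmetry of second derivatives, `[∂ₓ, L] = -∂_y` and `[∂_y, L] = ∂ₓ`.
In particular `L (k y / r) = -k x / r`. Expanding `A_y (L f)` and `L (A_y f)` with these rules,
all terms containing `L` applied to derivatives of `f` cancel, and what is left is `A_x f`.
-/

lemma isOpen_S : IsOpen S := isOpen_ne

def rotCW : ℝ × ℝ →L[ℝ] ℝ × ℝ :=
  (ContinuousLinearMap.snd ℝ ℝ ℝ).prod (-ContinuousLinearMap.fst ℝ ℝ ℝ)

@[simp] lemma rotCW_apply (v : ℝ × ℝ) : rotCW v = (v.2, -v.1) := rfl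

lemma lop_eq_fderiv (f : ℝ × ℝ → ℂ) (p : ℝ × ℝ) : Lop f p = fderiv ℝ f p (rotCW p) := by
  have hv : rotCW p = p.2 • ((1, 0) : ℝ × ℝ) + (-p.1) • ((0, 1) : ℝ × ℝ) := by
    ext <;> simp
  rw [hv, map_add, map_smul, map_smul, Complex.real_smul, Complex.real_smul, Lop, pdx, pdy]
  push_cast
  ring

section SecondDerivative

variable {E F : Type*} [NormedAddCommGroup E] [NormedSpace ℝ E] [NormedAddCommGroup F]
  [NormedSpace ℝ F] {f : E → F} {q : E} {s : Set E}

lemma fderiv_fderiv_apply_const (hf : DifferentiableAt ℝ (fderiv ℝ f) q) (v w : E) :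
    fderiv ℝ (fun z => fderiv ℝ f z v) q w = fderiv ℝ (fderiv ℝ f) q w v := by
  rw [fderiv_clm_apply hf (differentiableAt_const v)]
  simp

lemma ContDiffAt.differentiableAt_fderiv (hf : ContDiffAt ℝ 2 f q) :
    DifferentiableAt ℝ (fderiv ℝ f) q :=
  (hf.fderiv_right (m := 1) le_rfl).differentiableAt one_ne_zero

lemma ContDiffAt.fderiv_fderiv_apply_comm (hf : ContDiffAt ℝ 2 f q) (v w : E) :
    fderiv ℝ (fun z => fderiv ℝ f z v) q w = fderiv ℝ (fun z => fderiv ℝ f z w) q v := by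
  rw [fderiv_fderiv_apply_const hf.differentiableAt_fderiv,
    fderiv_fderiv_apply_const hf.differentiableAt_fderiv]
  exact hf.isSymmSndFDerivAt (by simp) w v

lemma ContDiffOn.fderiv_apply_of_isOpen (hf : ContDiffOn ℝ (⊤ : ℕ∞) f s) (hs : IsOpen s)
    {v : E → E} (hv : ContDiffOn ℝ (⊤ : ℕ∞) v s) :
    ContDiffOn ℝ (⊤ : ℕ∞) (fun z => fderiv ℝ f z (v z)) s :=
  (hf.fderiv_of_isOpen hs (by simp)).clm_apply hv

lemma ContDiffOn.contDiffAt_two_of_isOpen (hf : ContDiffOn ℝ (⊤ : ℕ∞) f s) (hs : IsOpen s)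
    {q : E} (hq : q ∈ s) : ContDiffAt ℝ 2 f q :=
  (hf.contDiffAt (hs.mem_nhds hq)).of_le (WithTop.coe_le_coe.2 le_top)

lemma ContDiffOn.differentiableAt_of_isOpen (hf : ContDiffOn ℝ (⊤ : ℕ∞) f s) (hs : IsOpen s)
    {q : E} (hq : q ∈ s) : DifferentiableAt ℝ f q :=
  (hf.differentiableOn (by simp)).differentiableAt (hs.mem_nhds hq)

end SecondDerivative

lemma fderiv_lop_apply {f : ℝ × ℝ → ℂ} {q : ℝ × ℝ} (hf : ContDiffAt ℝ 2 f q) (v : ℝ × ℝ) :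
    fderiv ℝ (Lop f) q v = Lop (fun z => fderiv ℝ f z v) q + fderiv ℝ f q (rotCW v) := by
  have hL : Lop f = fun z => fderiv ℝ f z (rotCW z) := funext (lop_eq_fderiv f)
  rw [hL, fderiv_clm_apply hf.differentiableAt_fderiv rotCW.differentiableAt, lop_eq_fderiv,
    hf.fderiv_fderiv_apply_comm, fderiv_fderiv_apply_const hf.differentiableAt_fderiv]
  simp [add_comm]

lemma pdy_pdx {f : ℝ × ℝ → ℂ} {q : ℝ × ℝ} (hf : ContDiffAt ℝ 2 f q) :
    pdy (pdx f) q = pdx (pdy f) q :=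
  hf.fderiv_fderiv_apply_comm _ _

lemma pdx_lop {f : ℝ × ℝ → ℂ} {q : ℝ × ℝ} (hf : ContDiffAt ℝ 2 f q) :
    pdx (Lop f) q = Lop (pdx f) q - pdy f q := by
  have hv : rotCW (1, 0) = -((0, 1) : ℝ × ℝ) := by simp
  rw [pdx, fderiv_lop_apply hf, hv, map_neg, sub_eq_add_neg]
  rfl

lemma pdy_lop {f : ℝ × ℝ → ℂ} {q : ℝ × ℝ} (hf : ContDiffAt ℝ 2 f q) :
    pdy (Lop f) q = Lop (pdy f) q + pdx f q := by
  have hv : rotCW (0, 1) = ((1, 0) : ℝ × ℝ) := by simp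
  rw [pdy, fderiv_lop_apply hf, hv]
  rfl

section Smooth

variable {s : Set (ℝ × ℝ)} {f : ℝ × ℝ → ℂ}

lemma ContDiffOn.pdx_of_isOpen (hf : ContDiffOn ℝ (⊤ : ℕ∞) f s) (hs : IsOpen s) :
    ContDiffOn ℝ (⊤ : ℕ∞) (pdx f) s :=
  hf.fderiv_apply_of_isOpen hs contDiffOn_const

lemma ContDiffOn.pdy_of_isOpen (hf : ContDiffOn ℝ (⊤ : ℕ∞) f s) (hs : IsOpen s) :
    ContDiffOn ℝ (⊤ : ℕ∞) (pdy f) s :=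
  hf.fderiv_apply_of_isOpen hs contDiffOn_const

lemma ContDiffOn.lop_of_isOpen (hf : ContDiffOn ℝ (⊤ : ℕ∞) f s) (hs : IsOpen s) :
    ContDiffOn ℝ (⊤ : ℕ∞) (Lop f) s := by
  rw [show Lop f = fun z => fderiv ℝ f z (rotCW z) from funext (lop_eq_fderiv f)]
  exact hf.fderiv_apply_of_isOpen hs rotCW.contDiff.contDiffOn

lemma pdx_pdx_lop (hf : ContDiffOn ℝ (⊤ : ℕ∞) f s) (hs : IsOpen s) {p : ℝ × ℝ} (hp : p ∈ s) :
    pdx (pdx (Lop f)) p = Lop (pdx (pdx f)) p - 2 * pdx (pdy f) p := by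
  have hfx := hf.pdx_of_isOpen hs
  have hfy := hf.pdy_of_isOpen hs
  have hev : pdx (Lop f) =ᶠ[nhds p] fun q => Lop (pdx f) q - pdy f q :=
    Filter.eventually_of_mem (hs.mem_nhds hp) fun q hq =>
      pdx_lop (hf.contDiffAt_two_of_isOpen hs hq)
  rw [pdx, hev.fderiv_eq, fderiv_fun_sub ((hfx.lop_of_isOpen hs).differentiableAt_of_isOpen hs hp)
    (hfy.differentiableAt_of_isOpen hs hp)]
  change pdx (Lop (pdx f)) p - pdx (pdy f) p = _
  rw [pdx_lop (hfx.contDiffAt_two_of_isOpen hs hp), pdy_pdx (hf.contDiffAt_two_of_isOpen hs hp)]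
  ring

lemma pdx_pdy_lop (hf : ContDiffOn ℝ (⊤ : ℕ∞) f s) (hs : IsOpen s) {p : ℝ × ℝ} (hp : p ∈ s) :
    pdx (pdy (Lop f)) p = Lop (pdx (pdy f)) p - pdy (pdy f) p + pdx (pdx f) p := by
  have hfx := hf.pdx_of_isOpen hs
  have hfy := hf.pdy_of_isOpen hs
  have hev : pdy (Lop f) =ᶠ[nhds p] fun q => Lop (pdy f) q + pdx f q :=
    Filter.eventually_of_mem (hs.mem_nhds hp) fun q hq =>
      pdy_lop (hf.contDiffAt_two_of_isOpen hs hq)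
  rw [pdx, hev.fderiv_eq, fderiv_fun_add ((hfy.lop_of_isOpen hs).differentiableAt_of_isOpen hs hp)
    (hfx.differentiableAt_of_isOpen hs hp)]
  change pdx (Lop (pdy f)) p + pdx (pdx f) p = _
  rw [pdx_lop (hfy.contDiffAt_two_of_isOpen hs hp)]

end Smooth

section Derivation

variable {g h : ℝ × ℝ → ℂ} {p : ℝ × ℝ}

lemma differentiableAt_ofReal_fst : DifferentiableAt ℝ (fun z : ℝ × ℝ => (z.1 : ℂ)) p :=
  ofRealCLM.differentiableAt.comp p differentiableAt_fst

lemma differentiableAt_ofReal_snd : DifferentiableAt ℝ (fun z : ℝ × ℝ => (z.2 : ℂ)) p :=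
  ofRealCLM.differentiableAt.comp p differentiableAt_snd

lemma lop_add (hg : DifferentiableAt ℝ g p) (hh : DifferentiableAt ℝ h p) :
    Lop (fun z => g z + h z) p = Lop g p + Lop h p := by
  simp only [lop_eq_fderiv, fderiv_fun_add hg hh, add_apply]

lemma lop_sub (hg : DifferentiableAt ℝ g p) (hh : DifferentiableAt ℝ h p) :
    Lop (fun z => g z - h z) p = Lop g p - Lop h p := by
  simp only [lop_eq_fderiv, fderiv_fun_sub hg hh, sub_apply]

lemma lop_mul (hg : DifferentiableAt ℝ g p) (hh : DifferentiableAt ℝ h p) :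
    Lop (fun z => g z * h z) p = g p * Lop h p + h p * Lop g p := by
  simp only [lop_eq_fderiv, fderiv_fun_mul hg hh, add_apply, smul_apply, smul_eq_mul]

lemma lop_const_mul (c : ℂ) (hh : DifferentiableAt ℝ h p) :
    Lop (fun z => c * h z) p = c * Lop h p := by
  simp only [lop_eq_fderiv, fderiv_const_mul hh, smul_apply, smul_eq_mul]

lemma lop_ofReal_fst (p : ℝ × ℝ) : Lop (fun z => (z.1 : ℂ)) p = p.2 := by
  have h : HasFDerivAt (fun z : ℝ × ℝ => (z.1 : ℂ)) (ofRealCLM.comp (.fst ℝ ℝ ℝ)) p :=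
    (ofRealCLM.comp (.fst ℝ ℝ ℝ)).hasFDerivAt
  simp [lop_eq_fderiv, h.fderiv]

lemma lop_ofReal_snd (p : ℝ × ℝ) : Lop (fun z => (z.2 : ℂ)) p = -p.1 := by
  have h : HasFDerivAt (fun z : ℝ × ℝ => (z.2 : ℂ)) (ofRealCLM.comp (.snd ℝ ℝ ℝ)) p :=
    (ofRealCLM.comp (.snd ℝ ℝ ℝ)).hasFDerivAt
  simp [lop_eq_fderiv, h.fderiv]

end Derivation

lemma fst_sq_add_snd_sq_pos {p : ℝ × ℝ} (hp : p ≠ 0) : 0 < p.1 ^ 2 + p.2 ^ 2 := by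
  refine lt_of_le_of_ne (by positivity) fun h => hp ?_
  obtain ⟨h1, h2⟩ := (add_eq_zero_iff_of_nonneg (sq_nonneg _) (sq_nonneg _)).1 h.symm
  exact Prod.ext (pow_eq_zero_iff two_ne_zero |>.1 h1) (pow_eq_zero_iff two_ne_zero |>.1 h2)

lemma lop_comp_fst_sq_add_snd_sq {φ : ℝ → ℂ} {p : ℝ × ℝ}
    (hφ : DifferentiableAt ℝ φ (p.1 ^ 2 + p.2 ^ 2)) :
    Lop (fun z => φ (z.1 ^ 2 + z.2 ^ 2)) p = 0 := by
  have hq : HasFDerivAt (fun z : ℝ × ℝ => z.1 ^ 2 + z.2 ^ 2) _ p :=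
    ((hasFDerivAt_fst (𝕜 := ℝ) (p := p)).pow 2).add ((hasFDerivAt_snd (𝕜 := ℝ) (p := p)).pow 2)
  rw [lop_eq_fderiv, show (fun z : ℝ × ℝ => φ (z.1 ^ 2 + z.2 ^ 2)) = φ ∘ _ from rfl,
    (hφ.hasFDerivAt.comp p hq).fderiv]
  simp
  ring

section Coulomb

variable (k : ℝ) {p : ℝ × ℝ}

lemma coulomb_eq_mul : (fun z : ℝ × ℝ => ((k * z.2 / rr z : ℝ) : ℂ)) =
    fun z => (z.2 : ℂ) * ((k / √(z.1 ^ 2 + z.2 ^ 2) : ℝ) : ℂ) := by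
  funext z
  push_cast [rr]
  ring

lemma differentiableAt_coulomb_radial {t : ℝ} (ht : 0 < t) :
    DifferentiableAt ℝ (fun t : ℝ => ((k / √t : ℝ) : ℂ)) t :=
  ofRealCLM.differentiableAt.comp t
    ((differentiableAt_const k).div (differentiableAt_id.sqrt ht.ne') (Real.sqrt_pos.2 ht).ne')

lemma differentiableAt_coulomb (hp : p ≠ 0) :
    DifferentiableAt ℝ (fun z : ℝ × ℝ => ((k * z.2 / rr z : ℝ) : ℂ)) p := by
  rw [coulomb_eq_mul]
  exact differentiableAt_ofReal_snd.mul (differentiableAt_coulomb_radial k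
    (fst_sq_add_snd_sq_pos hp) |>.comp (f := fun z : ℝ × ℝ => z.1 ^ 2 + z.2 ^ 2) p (by fun_prop))

lemma lop_coulomb (hp : p ≠ 0) :
    Lop (fun z : ℝ × ℝ => ((k * z.2 / rr z : ℝ) : ℂ)) p = -((k * p.1 / rr p : ℝ) : ℂ) := by
  have hφ := differentiableAt_coulomb_radial k (fst_sq_add_snd_sq_pos hp)
  have hr : DifferentiableAt ℝ (fun z : ℝ × ℝ => ((k / √(z.1 ^ 2 + z.2 ^ 2) : ℝ) : ℂ)) p :=
    hφ.comp (f := fun z : ℝ × ℝ => z.1 ^ 2 + z.2 ^ 2) p (by fun_prop)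
  rw [coulomb_eq_mul, lop_mul differentiableAt_ofReal_snd hr, lop_ofReal_snd,
    lop_comp_fst_sq_add_snd_sq hφ]
  push_cast [rr]
  ring

end Coulomb

lemma lop_ayop (k : ℝ) {f : ℝ × ℝ → ℂ} (hf : ContDiffOn ℝ (⊤ : ℕ∞) f S) {p : ℝ × ℝ}
    (hp : p ∈ S) :
    Lop (Ayop k f) p = (Complex.I / (Real.sqrt 2 : ℂ)) *
      ((p.2 : ℂ) * Lop (pdx (pdx f)) p - (p.1 : ℂ) * pdx (pdx f) p
        - (p.1 : ℂ) * Lop (pdx (pdy f)) p - (p.2 : ℂ) * pdx (pdy f) p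
        - (1 / 2 : ℂ) * Lop (pdy f) p + ((k * p.2 / rr p : ℝ) : ℂ) * Lop f p
        - ((k * p.1 / rr p : ℝ) : ℂ) * f p) := by
  have hfx := hf.pdx_of_isOpen isOpen_S
  have hfy := hf.pdy_of_isOpen isOpen_S
  have d := hf.differentiableAt_of_isOpen isOpen_S hp
  have dy := hfy.differentiableAt_of_isOpen isOpen_S hp
  have dxx := (hfx.pdx_of_isOpen isOpen_S).differentiableAt_of_isOpen isOpen_S hp
  have dxy := (hfy.pdx_of_isOpen isOpen_S).differentiableAt_of_isOpen isOpen_S hp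
  have dX : DifferentiableAt ℝ (fun z : ℝ × ℝ => (z.1 : ℂ)) p := differentiableAt_ofReal_fst
  have dY : DifferentiableAt ℝ (fun z : ℝ × ℝ => (z.2 : ℂ)) p := differentiableAt_ofReal_snd
  have dc := differentiableAt_coulomb k hp
  have hA : Ayop k f = fun z => (Complex.I / (Real.sqrt 2 : ℂ)) *
      ((z.2 : ℂ) * pdx (pdx f) z - (z.1 : ℂ) * pdx (pdy f) z - (1 / 2 : ℂ) * pdy f z
        + ((k * z.2 / rr z : ℝ) : ℂ) * f z) := rfl
  rw [hA, lop_const_mul _ (by fun_prop), lop_add (by fun_prop) (by fun_prop),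
    lop_sub (by fun_prop) (by fun_prop), lop_sub (by fun_prop) (by fun_prop), lop_mul dY dxx,
    lop_mul dX dxy, lop_const_mul _ dy, lop_mul dc d, lop_ofReal_fst, lop_ofReal_snd,
    lop_coulomb k hp]
  ring

theorem stmt_2_general (k : ℝ) (f : ℝ × ℝ → ℂ)
    (hf : ContDiffOn ℝ (⊤ : ℕ∞) f S) (p : ℝ × ℝ) (hp : p ∈ S) :
    Ayop k (Lop f) p - Lop (Ayop k f) p = Axop k f p := by
  rw [lop_ayop k hf hp, Ayop, pdx_pdx_lop hf isOpen_S hp, pdx_pdy_lop hf isOpen_S hp,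
    pdy_lop (hf.contDiffAt_two_of_isOpen isOpen_S hp), Axop]
  ring

/-- The commutation relation `[A_y, L] = A_x`, pointwise on `S = ℝ² \ {0}`. -/
theorem stmt_2 (k : ℝ) (hk : 0 < k) (f : ℝ × ℝ → ℂ)
    (hf : ContDiffOn ℝ (⊤ : ℕ∞) f S) (p : ℝ × ℝ) (hp : p ∈ S) :
    Ayop k (Lop f) p - Lop (Ayop k f) p = Axop k f p :=
  stmt_2_general k f hf p hp
end
end

section
/- The commutation relation [L, A_x] = A_y holds for the symmetry operators of the two-dimensional hydrogen atom: for every function f : ℝ² → ℂ that is C^∞ on S = ℝ² \ {0} and every p ∈ S, one has L(A_x f)(p) − A_x(L f)(p) = A_y f(p). -/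
/-!
`L` is the derivative along the rotation field `(y, -x)`. It is therefore a derivation that kills
radial functions, and it rotates directional derivatives: `[L, ∂_v] = ∂_{Jv}` with
`Jv = (-v₂, v₁)`. Thus `[L, x] = y`, `[L, y] = -x`, `[L, ∂ₓ] = ∂_y`, `[L, ∂_y] = -∂ₓ` and
`[L, kx/r] = ky/r`. Since `[L, ·]` obeys the Leibniz rule on products of operators, `[L, A_x]`
can be computed term by term, and collecting terms (using `∂ₓ∂_y = ∂_y∂ₓ`) gives `A_y`.
-/

noncomputable section

open Complex

open Topology

@[fun_prop]
lemma contDiff_ofReal {n : WithTop ℕ∞} : ContDiff ℝ n ((↑) : ℝ → ℂ) :=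
  ofRealCLM.contDiff

def dirDeriv (v : ℝ × ℝ) (g : ℝ × ℝ → ℂ) (q : ℝ × ℝ) : ℂ := fderiv ℝ g q v

lemma pdx_eq_dirDeriv : pdx = dirDeriv (1, 0) := rfl

lemma pdy_eq_dirDeriv : pdy = dirDeriv (0, 1) := rfl

section DirDeriv

variable {g h : ℝ × ℝ → ℂ} {p v w : ℝ × ℝ}

lemma dirDeriv_eq_pdx_add_pdy (g : ℝ × ℝ → ℂ) (p v : ℝ × ℝ) :
    dirDeriv v g p = v.1 * pdx g p + v.2 * pdy g p := by
  have hv : v = v.1 • ((1 : ℝ), (0 : ℝ)) + v.2 • ((0 : ℝ), (1 : ℝ)) := by ext <;> simp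
  rw [dirDeriv, hv, map_add, map_smul, map_smul]
  simp [pdx, pdy, Complex.real_smul]

lemma dirDeriv_neg_left (v : ℝ × ℝ) (g : ℝ × ℝ → ℂ) : dirDeriv (-v) g = -dirDeriv v g := by
  ext q
  simp [dirDeriv]

lemma dirDeriv_neg_right (v : ℝ × ℝ) (g : ℝ × ℝ → ℂ) (p : ℝ × ℝ) :
    dirDeriv v (-g) p = -dirDeriv v g p := by
  simp [dirDeriv, fderiv_neg]

lemma dirDeriv_add (hg : DifferentiableAt ℝ g p) (hh : DifferentiableAt ℝ h p) :
    dirDeriv v (fun q => g q + h q) p = dirDeriv v g p + dirDeriv v h p := by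
  simp [dirDeriv, fderiv_fun_add hg hh]

lemma dirDeriv_sub (hg : DifferentiableAt ℝ g p) (hh : DifferentiableAt ℝ h p) :
    dirDeriv v (fun q => g q - h q) p = dirDeriv v g p - dirDeriv v h p := by
  simp [dirDeriv, fderiv_fun_sub hg hh]

lemma dirDeriv_mul (hg : DifferentiableAt ℝ g p) (hh : DifferentiableAt ℝ h p) :
    dirDeriv v (fun q => g q * h q) p = dirDeriv v g p * h p + g p * dirDeriv v h p := by
  simp only [dirDeriv, fderiv_fun_mul hg hh, add_apply, smul_apply, smul_eq_mul]
  ring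

lemma dirDeriv_ofReal_fst : dirDeriv v (fun q => (q.1 : ℂ)) p = v.1 := by
  change fderiv ℝ (ofRealCLM.comp (ContinuousLinearMap.fst ℝ ℝ ℝ)) p v = _
  simp [ContinuousLinearMap.fderiv]

lemma dirDeriv_ofReal_snd : dirDeriv v (fun q => (q.2 : ℂ)) p = v.2 := by
  change fderiv ℝ (ofRealCLM.comp (ContinuousLinearMap.snd ℝ ℝ ℝ)) p v = _
  simp [ContinuousLinearMap.fderiv]

lemma _root_.Filter.EventuallyEq.dirDeriv_eq (hgh : g =ᶠ[𝓝 p] h) :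
    dirDeriv v g p = dirDeriv v h p := by
  rw [dirDeriv, dirDeriv, hgh.fderiv_eq]

lemma _root_.ContDiffAt.dirDeriv {m n : WithTop ℕ∞} (hg : ContDiffAt ℝ n g p) (hmn : m + 1 ≤ n) :
    ContDiffAt ℝ m (dirDeriv v g) p :=
  (hg.fderiv_right hmn).clm_apply contDiffAt_const

lemma dirDeriv_dirDeriv (hg : DifferentiableAt ℝ (fderiv ℝ g) p) :
    dirDeriv v (dirDeriv w g) p = fderiv ℝ (fderiv ℝ g) p v w := by
  change fderiv ℝ (fun q => fderiv ℝ g q w) p v = _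
  simp [fderiv_clm_apply hg (differentiableAt_const w)]

lemma dirDeriv_comm (hg : ContDiffAt ℝ 2 g p) :
    dirDeriv v (dirDeriv w g) p = dirDeriv w (dirDeriv v g) p := by
  have hd : DifferentiableAt ℝ (fderiv ℝ g) p :=
    (hg.fderiv_right le_rfl).differentiableAt one_ne_zero
  have hsymm : IsSymmSndFDerivAt ℝ g p :=
    hg.isSymmSndFDerivAt (by simp [minSmoothness_of_isRCLikeNormedField])
  rw [dirDeriv_dirDeriv hd, dirDeriv_dirDeriv hd, hsymm v w]

end DirDeriv

section AngularMomentum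

variable {g h : ℝ × ℝ → ℂ} {p : ℝ × ℝ}

lemma Lop_eq_dirDeriv (g : ℝ × ℝ → ℂ) (p : ℝ × ℝ) : Lop g p = dirDeriv (p.2, -p.1) g p := by
  rw [dirDeriv_eq_pdx_add_pdy, Lop]
  push_cast
  ring

lemma Lop_add (hg : DifferentiableAt ℝ g p) (hh : DifferentiableAt ℝ h p) :
    Lop (fun q => g q + h q) p = Lop g p + Lop h p := by
  simp only [Lop_eq_dirDeriv, dirDeriv_add hg hh]

lemma Lop_sub (hg : DifferentiableAt ℝ g p) (hh : DifferentiableAt ℝ h p) :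
    Lop (fun q => g q - h q) p = Lop g p - Lop h p := by
  simp only [Lop_eq_dirDeriv, dirDeriv_sub hg hh]

lemma Lop_const_mul (c : ℂ) (hg : DifferentiableAt ℝ g p) :
    Lop (fun q => c * g q) p = c * Lop g p := by
  simp [Lop_eq_dirDeriv, dirDeriv, fderiv_const_mul hg]

lemma Lop_mul (hg : DifferentiableAt ℝ g p) (hh : DifferentiableAt ℝ h p) :
    Lop (fun q => g q * h q) p = Lop g p * h p + g p * Lop h p := by
  simp only [Lop_eq_dirDeriv, dirDeriv_mul hg hh]

lemma Lop_ofReal_fst : Lop (fun q => (q.1 : ℂ)) p = p.2 := by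
  rw [Lop_eq_dirDeriv, dirDeriv_ofReal_fst]

lemma Lop_ofReal_snd : Lop (fun q => (q.2 : ℂ)) p = -p.1 := by
  rw [Lop_eq_dirDeriv, dirDeriv_ofReal_snd, ofReal_neg]

lemma _root_.ContDiffAt.Lop {m n : WithTop ℕ∞} (hg : ContDiffAt ℝ n g p) (hmn : m + 1 ≤ n) :
    ContDiffAt ℝ m (Lop g) p := by
  have hx : ContDiffAt ℝ m (pdx g) p := hg.dirDeriv hmn
  have hy : ContDiffAt ℝ m (pdy g) p := hg.dirDeriv hmn
  change ContDiffAt ℝ m (fun q => (q.2 : ℂ) * pdx g q - (q.1 : ℂ) * pdy g q) p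
  fun_prop

lemma Lop_dirDeriv_sub_dirDeriv_Lop (hg : ContDiffAt ℝ 2 g p) (v : ℝ × ℝ) :
    Lop (dirDeriv v g) p - dirDeriv v (Lop g) p = dirDeriv (-v.2, v.1) g p := by
  have hx : DifferentiableAt ℝ (pdx g) p :=
    (hg.dirDeriv (m := 1) le_rfl).differentiableAt one_ne_zero
  have hy : DifferentiableAt ℝ (pdy g) p :=
    (hg.dirDeriv (m := 1) le_rfl).differentiableAt one_ne_zero
  have hLg : Lop g = fun q => (q.2 : ℂ) * pdx g q - (q.1 : ℂ) * pdy g q := rfl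
  rw [hLg, dirDeriv_sub (by fun_prop) (by fun_prop), dirDeriv_mul (by fun_prop) hx,
    dirDeriv_mul (by fun_prop) hy, dirDeriv_ofReal_fst, dirDeriv_ofReal_snd,
    dirDeriv_eq_pdx_add_pdy _ _ (-v.2, v.1)]
  simp only [Lop, pdx_eq_dirDeriv, pdy_eq_dirDeriv, dirDeriv_comm (v := v) hg]
  push_cast
  ring

lemma Lop_dirDeriv_dirDeriv_sub_dirDeriv_dirDeriv_Lop (hg : ContDiffAt ℝ 3 g p) (v w : ℝ × ℝ) :
    Lop (dirDeriv v (dirDeriv w g)) p - dirDeriv v (dirDeriv w (Lop g)) p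
      = dirDeriv (-v.2, v.1) (dirDeriv w g) p + dirDeriv v (dirDeriv (-w.2, w.1) g) p := by
  have houter := Lop_dirDeriv_sub_dirDeriv_Lop (hg.dirDeriv (m := 2) (v := w) le_rfl) v
  have hinner : (fun q => Lop (dirDeriv w g) q - dirDeriv w (Lop g) q) =ᶠ[𝓝 p]
      dirDeriv (-w.2, w.1) g := by
    filter_upwards [hg.eventually (by simp)] with q hq
    exact Lop_dirDeriv_sub_dirDeriv_Lop (hq.of_le (by norm_num)) w
  have hL : DifferentiableAt ℝ (Lop (dirDeriv w g)) p :=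
    ((hg.dirDeriv (m := 2) le_rfl).Lop (m := 1) le_rfl).differentiableAt one_ne_zero
  have hR : DifferentiableAt ℝ (dirDeriv w (Lop g)) p :=
    ((hg.Lop (m := 2) le_rfl).dirDeriv (m := 1) le_rfl).differentiableAt one_ne_zero
  rw [← houter, ← hinner.dirDeriv_eq, dirDeriv_sub hL hR]
  ring

lemma Lop_pdx_sub_pdx_Lop (hg : ContDiffAt ℝ 2 g p) :
    Lop (pdx g) p - pdx (Lop g) p = pdy g p := by
  simpa [pdx_eq_dirDeriv, pdy_eq_dirDeriv] using Lop_dirDeriv_sub_dirDeriv_Lop hg (1, 0)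

lemma Lop_pdx_pdy_sub_pdx_pdy_Lop (hg : ContDiffAt ℝ 3 g p) :
    Lop (pdx (pdy g)) p - pdx (pdy (Lop g)) p = pdy (pdy g) p - pdx (pdx g) p := by
  have h := Lop_dirDeriv_dirDeriv_sub_dirDeriv_dirDeriv_Lop hg (1, 0) (0, 1)
  rw [show ((-(1 : ℝ)), (0 : ℝ)) = -((1 : ℝ), (0 : ℝ)) by simp, dirDeriv_neg_left,
    dirDeriv_neg_right] at h
  simpa [pdx_eq_dirDeriv, pdy_eq_dirDeriv, sub_eq_add_neg] using h

lemma Lop_pdy_pdy_sub_pdy_pdy_Lop (hg : ContDiffAt ℝ 3 g p) :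
    Lop (pdy (pdy g)) p - pdy (pdy (Lop g)) p = -2 * pdx (pdy g) p := by
  have h := Lop_dirDeriv_dirDeriv_sub_dirDeriv_dirDeriv_Lop hg (0, 1) (0, 1)
  rw [show ((-(1 : ℝ)), (0 : ℝ)) = -((1 : ℝ), (0 : ℝ)) by simp, dirDeriv_neg_left,
    dirDeriv_neg_left, dirDeriv_neg_right, dirDeriv_comm (hg.of_le (by norm_num))] at h
  simp only [pdx_eq_dirDeriv, pdy_eq_dirDeriv, h, Pi.neg_apply]
  ring

end AngularMomentum

section Coulomb

variable {p : ℝ × ℝ}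

lemma normSq_pos_of_mem_S (hp : p ∈ S) : 0 < p.1 ^ 2 + p.2 ^ 2 := by
  have h : p.1 ≠ 0 ∨ p.2 ≠ 0 := by
    by_contra! h0
    exact hp (Prod.ext h0.1 h0.2)
  rcases h with h | h <;> positivity

lemma Lop_comp_normSq {φ : ℝ → ℂ} (hφ : DifferentiableAt ℝ φ (p.1 ^ 2 + p.2 ^ 2)) :
    Lop (fun q => φ (q.1 ^ 2 + q.2 ^ 2)) p = 0 := by
  have hs : DifferentiableAt ℝ (fun q : ℝ × ℝ => q.1 ^ 2 + q.2 ^ 2) p := by fun_prop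
  have hs0 : fderiv ℝ (fun q : ℝ × ℝ => q.1 ^ 2 + q.2 ^ 2) p (p.2, -p.1) = 0 := by
    rw [fderiv_fun_add (by fun_prop) (by fun_prop), fderiv_fun_pow _ (by fun_prop),
      fderiv_fun_pow _ (by fun_prop)]
    simp only [fderiv_fst, fderiv_snd, add_apply, smul_apply, ContinuousLinearMap.coe_fst',
      ContinuousLinearMap.coe_snd', smul_eq_mul, nsmul_eq_mul]
    ring
  rw [Lop_eq_dirDeriv, dirDeriv, show (fun q : ℝ × ℝ => φ (q.1 ^ 2 + q.2 ^ 2))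
    = φ ∘ fun q => q.1 ^ 2 + q.2 ^ 2 from rfl, fderiv_comp p hφ hs, ContinuousLinearMap.comp_apply,
    hs0, map_zero]

lemma Lop_coulomb (c : ℝ) (hp : p ∈ S) :
    Lop (fun q => ((c * q.1 / rr q : ℝ) : ℂ)) p = ((c * p.2 / rr p : ℝ) : ℂ) := by
  set φ : ℝ → ℂ := fun t => ((c * (√t)⁻¹ : ℝ) : ℂ)
  have hV : (fun q => ((c * q.1 / rr q : ℝ) : ℂ))
      = fun q => (q.1 : ℂ) * φ (q.1 ^ 2 + q.2 ^ 2) := by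
    funext q
    simp only [φ, rr]
    push_cast
    ring
  have hpos := normSq_pos_of_mem_S hp
  have hφ : DifferentiableAt ℝ φ (p.1 ^ 2 + p.2 ^ 2) := by
    fun_prop (disch := positivity)
  rw [hV, Lop_mul (by fun_prop) (by fun_prop), Lop_comp_normSq hφ, Lop_ofReal_fst]
  simp only [φ, rr]
  push_cast
  ring

end Coulomb

lemma Lop_Axop (k : ℝ) {f : ℝ × ℝ → ℂ} {p : ℝ × ℝ} (hf : ContDiffAt ℝ 3 f p) (hp : p ∈ S) :
    Lop (Axop k f) p = I / (√2 : ℂ) *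
      ((p.2 * pdy (pdy f) p + p.1 * Lop (pdy (pdy f)) p)
        - (-p.1 * pdx (pdy f) p + p.2 * Lop (pdx (pdy f)) p) - 1 / 2 * Lop (pdx f) p
        + (((k * p.2 / rr p : ℝ) : ℂ) * f p + ((k * p.1 / rr p : ℝ) : ℂ) * Lop f p)) := by
  have hf₀ : DifferentiableAt ℝ f p := hf.differentiableAt (by norm_num)
  have hfx : DifferentiableAt ℝ (pdx f) p :=
    (hf.dirDeriv (m := 2) (by norm_num)).differentiableAt (by norm_num)
  have hfxy : DifferentiableAt ℝ (pdx (pdy f)) p :=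
    ((hf.dirDeriv (m := 2) (by norm_num)).dirDeriv (m := 1) le_rfl).differentiableAt one_ne_zero
  have hfyy : DifferentiableAt ℝ (pdy (pdy f)) p :=
    ((hf.dirDeriv (m := 2) (by norm_num)).dirDeriv (m := 1) le_rfl).differentiableAt one_ne_zero
  have hV : DifferentiableAt ℝ (fun q => ((k * q.1 / rr q : ℝ) : ℂ)) p := by
    have hpos := normSq_pos_of_mem_S hp
    unfold rr
    fun_prop (disch := positivity)
  change Lop (fun q => I / (√2 : ℂ) * ((q.1 * pdy (pdy f) q - q.2 * pdx (pdy f) q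
    - 1 / 2 * pdx f q) + ((k * q.1 / rr q : ℝ) : ℂ) * f q)) p = _
  rw [Lop_const_mul _ (by fun_prop), Lop_add (by fun_prop) (by fun_prop),
    Lop_sub (by fun_prop) (by fun_prop), Lop_sub (by fun_prop) (by fun_prop),
    Lop_mul (by fun_prop) hfyy, Lop_mul (by fun_prop) hfxy, Lop_const_mul _ hfx, Lop_mul hV hf₀,
    Lop_ofReal_fst, Lop_ofReal_snd, Lop_coulomb k hp]

theorem stmt_3_general (k : ℝ) (f : ℝ × ℝ → ℂ)
    (hf : ContDiffOn ℝ (⊤ : ℕ∞) f S) (p : ℝ × ℝ) (hp : p ∈ S) :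
    Lop (Axop k f) p - Axop k (Lop f) p = Ayop k f p := by
  have hf3 : ContDiffAt ℝ 3 f p :=
    (hf.contDiffAt (isOpen_ne.mem_nhds hp)).of_le (WithTop.coe_le_coe.2 le_top)
  have hx := Lop_pdx_sub_pdx_Lop (hf3.of_le (by norm_num))
  have hxy := Lop_pdx_pdy_sub_pdx_pdy_Lop hf3
  have hyy := Lop_pdy_pdy_sub_pdy_pdy_Lop hf3
  rw [Lop_Axop k hf3 hp, Axop, Ayop]
  linear_combination (I / (√2 : ℂ)) * (p.1 * hyy - p.2 * hxy - hx / 2)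

/-- The commutation relation `[L, A_x] = A_y`, pointwise on `S = ℝ² \ {0}`. -/
theorem stmt_3 (k : ℝ) (hk : 0 < k) (f : ℝ × ℝ → ℂ)
    (hf : ContDiffOn ℝ (⊤ : ℕ∞) f S) (p : ℝ × ℝ) (hp : p ∈ S) :
    Lop (Axop k f) p - Axop k (Lop f) p = Ayop k f p :=
  stmt_3_general k f hf p hp
end
end
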